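/- For every n ≥ 2, the (n+1)-ary Boolean relation R = { (x₁,…,xₙ,c₁) ∈ Bool^{n+1} | (x₁ ∨ ⋯ ∨ xₙ) ∧ (c₁ = 1) } is a weak base of the co-clone it generates (this co-clone is IS^n_{0} in Post's lattice): for every finite set Δ of Boolean relations with Pol(Δ) = Pol({R}) one has pPol(Δ) ⊆ pPol({R}). -/

import Mathlib

/-- A Boolean relation of arity `k`: a set of `k`-tuples over `Bool`. -/
abbrev BRel (k : ℕ) := Set (Fin k → Bool)

/-- A total `m`-ary Boolean operation `f` preserves a `k`-ary relation `R`. -/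
def Preserves {m k : ℕ} (f : (Fin m → Bool) → Bool) (R : BRel k) : Prop :=
  ∀ ts : Fin m → Fin k → Bool, (∀ j, ts j ∈ R) → (fun i => f (fun j => ts j i)) ∈ R

/-- A partial `m`-ary Boolean operation (modelled with `Option Bool`; `none` =
undefined) preserves a `k`-ary relation `R`. -/
def PPreserves {m k : ℕ} (f : (Fin m → Bool) → Option Bool) (R : BRel k) : Prop :=
  ∀ ts : Fin m → Fin k → Bool, (∀ j, ts j ∈ R) →
    ∀ u : Fin k → Bool, (∀ i, f (fun j => ts j i) = some (u i)) → u ∈ R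

/-- The set of all (finitary, total) polymorphisms of a set of relations. -/
def Pol (Γ : Set (Σ k, BRel k)) : Set (Σ m, (Fin m → Bool) → Bool) :=
  { f | ∀ R ∈ Γ, Preserves f.2 R.2 }

/-- The set of all partial polymorphisms of a set of relations. -/
def pPol (Γ : Set (Σ k, BRel k)) : Set (Σ m, (Fin m → Bool) → Option Bool) :=
  { f | ∀ R ∈ Γ, PPreserves f.2 R.2 }

/-- `R` is a weak base of the co-clone it generates: every finite `Δ` with the
same polymorphisms as `R` satisfies `pPol Δ ⊆ pPol {R}`. -/
def IsWeakBase {k : ℕ} (R : BRel k) : Prop :=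
  ∀ Δ : Set (Σ k, BRel k), Δ.Finite →
    Pol Δ = Pol {⟨k, R⟩} → pPol Δ ⊆ pPol {⟨k, R⟩}

/-!
Let `ι` send the `i`-th unit vector of `Bool^n` to the coordinate `i` of `R` and every other
vector to the constant coordinate `n`. For every `r ∈ R` the operation `a ↦ r (ι a)` is a
polymorphism of `R`; this is where `n ≥ 2` enters, since the all-true column must not be a
unit vector. Now let `f ∈ pPol Δ` and `t₁, …, tₘ ∈ R` with `f (t₁, …, tₘ) = u`. The total
operation `u ∘ ι = f (t₁ ∘ ι, …, tₘ ∘ ι)` is a composition of a partial polymorphism of `Δ`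
with polymorphisms of `Δ`, hence lies in `Pol Δ = Pol {R}`. Applying it to the rows of the
matrix whose columns are the unit vectors followed by the all-true column recovers `u`,
so `u ∈ R`.
-/

theorem PPreserves.preserves_comp {m l k : ℕ} {f : (Fin m → Bool) → Option Bool} {R : BRel k}
    (hf : PPreserves f R) {g : Fin m → (Fin l → Bool) → Bool} (hg : ∀ j, Preserves (g j) R)
    {h : (Fin l → Bool) → Bool} (hfg : ∀ a, f (fun j => g j a) = some (h a)) :
    Preserves h R :=
  fun bs hbs => hf (fun j i => g j (fun j' => bs j' i)) (fun j => hg j bs hbs) _ fun _ => hfg _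

theorem isWeakBase_of_leftInverse {m k : ℕ} {R : BRel k} (ts : Fin m → Fin k → Bool)
    (hts : ∀ j, ts j ∈ R) (ι : (Fin m → Bool) → Fin k) (hι : ∀ i, ι (fun j => ts j i) = i)
    (hpol : ∀ r ∈ R, Preserves (fun a => r (ι a)) R) : IsWeakBase R := by
  intro Δ _ hPol f hf R' hR' ss hss u hu
  rw [Set.mem_singleton_iff] at hR'
  subst hR'
  have hpolΔ : ∀ r ∈ R, (⟨m, fun a => r (ι a)⟩ : Σ m, (Fin m → Bool) → Bool) ∈ Pol Δ := by
    intro r hr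
    rw [hPol]
    rintro _ rfl
    exact hpol r hr
  have hu_pol : (⟨m, fun a => u (ι a)⟩ : Σ m, (Fin m → Bool) → Bool) ∈ Pol Δ :=
    fun S hS => (hf S hS).preserves_comp (fun j => hpolΔ (ss j) (hss j) S hS) fun a => hu (ι a)
  rw [hPol] at hu_pol
  simpa only [hι] using hu_pol _ rfl ts hts

def unitVec (n : ℕ) (i : Fin n) : Fin n → Bool := fun j => decide (j = i)

theorem unitVec_injective (n : ℕ) : Function.Injective (unitVec n) := fun i i' h => by
  simpa [unitVec] using congrFun h i

theorem const_true_ne_unitVec {n : ℕ} (hn : 2 ≤ n) (i : Fin n) :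
    (fun _ : Fin n => true) ≠ unitVec n i := by
  intro h
  obtain ⟨j, hj⟩ := Fintype.exists_ne_of_one_lt_card (by simp; omega) i
  simpa [unitVec, hj] using congrFun h j

noncomputable def unitVecIndex (n : ℕ) (a : Fin n → Bool) : Fin (n + 1) :=
  if h : ∃ i, a = unitVec n i then Fin.castSucc h.choose else Fin.last n

theorem unitVecIndex_unitVec {n : ℕ} (i : Fin n) :
    unitVecIndex n (unitVec n i) = Fin.castSucc i := by
  have h : ∃ i', unitVec n i = unitVec n i' := ⟨i, rfl⟩
  rw [unitVecIndex, dif_pos h, (unitVec_injective n h.choose_spec).symm]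

theorem unitVecIndex_of_forall_ne {n : ℕ} {a : Fin n → Bool} (h : ∀ i, a ≠ unitVec n i) :
    unitVecIndex n a = Fin.last n := by
  rw [unitVecIndex, dif_neg (not_exists.mpr h)]

def orConstRel (n : ℕ) : BRel (n + 1) :=
  { t | (∃ i : Fin n, t (Fin.castSucc i) = true) ∧ t (Fin.last n) = true }

theorem preserves_orConstRel_comp_unitVecIndex {n : ℕ} (hn : 2 ≤ n) {r : Fin (n + 1) → Bool}
    (hr : r ∈ orConstRel n) : Preserves (fun a => r (unitVecIndex n a)) (orConstRel n) := by
  intro ts hts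
  refine ⟨?_, ?_⟩
  · by_cases hcols : ∀ i : Fin n, ∃ l, (fun j => ts j (Fin.castSucc i)) = unitVec n l
    · choose σ hσ using hcols
      -- each row has a `true` among its first `n` entries; column `i` is `true` only in row `σ i`
      have hσ_surj : Function.Surjective σ := by
        intro j
        obtain ⟨i, hi⟩ := (hts j).1
        refine ⟨i, ?_⟩
        simpa [unitVec, hi, eq_comm] using congrFun (hσ i) j
      obtain ⟨l, hl⟩ := hr.1
      obtain ⟨i, rfl⟩ := hσ_surj l
      exact ⟨i, by simpa only [hσ i, unitVecIndex_unitVec] using hl⟩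
    · simp only [not_forall, not_exists] at hcols
      obtain ⟨i, hi⟩ := hcols
      exact ⟨i, by simpa only [unitVecIndex_of_forall_ne hi] using hr.2⟩
  · have hlast : (fun j => ts j (Fin.last n)) = fun _ => true := funext fun j => (hts j).2
    simpa only [hlast, unitVecIndex_of_forall_ne (const_true_ne_unitVec hn)] using hr.2

theorem isWeakBase_orConstRel {n : ℕ} (hn : 2 ≤ n) : IsWeakBase (orConstRel n) := by
  refine isWeakBase_of_leftInverse
    (fun j i => decide (i = Fin.castSucc j) || decide (i = Fin.last n))
    (fun j => ⟨⟨j, by simp⟩, by simp⟩) (unitVecIndex n) (fun i => ?_)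
    fun r hr => preserves_orConstRel_comp_unitVecIndex hn hr
  induction i using Fin.lastCases with
  | last => simpa using unitVecIndex_of_forall_ne (const_true_ne_unitVec hn)
  | cast i =>
    convert unitVecIndex_unitVec i using 2
    funext j
    simp [unitVec, eq_comm]

theorem stmt5 (n : ℕ) (hn : 2 ≤ n) :
    IsWeakBase { t : Fin (n + 1) → Bool |
      (∃ i : Fin n, t (Fin.castLE (by omega) i) = true) ∧
      t ⟨n, by omega⟩ = true } :=
  isWeakBase_orConstRel hn
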